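/- Every Backward Rewarding Mechanism M[f₁,…,fₙ] is merit-based: (Normality) a creator with score 0 receives reward 0, and a single creator with score 1 against all-zero competitors receives ∫₀¹ f₁(t) dt > 0; (Fairness) for nonincreasing scores 1 ≥ σ₁ ≥ ⋯ ≥ σₙ ≥ 0 and i < j, the reward of the i-th ranked creator minus that of the j-th ranked creator equals Σ_{k=i}^{j−1} ∫_{σ_{k+1}}^{σ_k} f_k(t) dt ≥ 0; (Negative externality) if the scores of the creators other than i are componentwise weakly increased while σᵢ is unchanged, creator i's reward weakly decreases. -/

import Mathlib

open MeasureTheory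

/-- A score vector is "sorted" if it is nonincreasing and takes values in `[0,1]`. -/
def SortedScores (n : ℕ) (σ : Fin n → ℝ) : Prop :=
  (∀ i j : Fin n, i ≤ j → σ j ≤ σ i) ∧ ∀ i, σ i ∈ Set.Icc (0:ℝ) 1

/-- The sorted score vector consisting of `k` ones followed by zeros. -/
def onesVec (n k : ℕ) : Fin n → ℝ := fun i => if (i : ℕ) < k then 1 else 0

/-- The defining hypotheses on the family `f₁, …, fₙ` of a Backward Rewarding
Mechanism: each `f k` is integrable on `[0,1]`, nonnegative on `[0,1]`,
pointwise nonincreasing in the index `k`, and `f₁ > 0` on `[0,1]`. -/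
def BRMHyp {n : ℕ} (f : Fin n → ℝ → ℝ) : Prop :=
  (∀ k, IntervalIntegrable (f k) volume 0 1) ∧
  (∀ k, ∀ t ∈ Set.Icc (0:ℝ) 1, 0 ≤ f k t) ∧
  (∀ k k' : Fin n, k ≤ k' → ∀ t ∈ Set.Icc (0:ℝ) 1, f k' t ≤ f k t) ∧
  (∀ k : Fin n, (k : ℕ) = 0 → ∀ t ∈ Set.Icc (0:ℝ) 1, 0 < f k t)

/-- `σ_{k+1}`, with the convention `σ_{n+1} = 0`. -/
def nextVal {n : ℕ} (σ : Fin n → ℝ) (k : Fin n) : ℝ :=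
  if h : (k : ℕ) + 1 < n then σ ⟨(k : ℕ) + 1, h⟩ else 0

/-- The BRM reward of the creator at (0-indexed) rank `p` of the nonincreasing score
vector `σ`: `∑_{k ≥ p} ∫_{σ_{k+1}}^{σ_k} f_k(t) dt`. -/
noncomputable def brmRankedN {n : ℕ} (f : Fin n → ℝ → ℝ) (σ : Fin n → ℝ) (p : ℕ) : ℝ :=
  ∑ k : Fin n, if p ≤ (k : ℕ) then ∫ t in (nextVal σ k)..(σ k), f k t else 0

/-- The BRM reward of the creator holding the `i`-th largest score of the
nonincreasing score vector `σ` (0-indexed). -/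
noncomputable def brmRanked {n : ℕ} (f : Fin n → ℝ → ℝ) (σ : Fin n → ℝ) (i : Fin n) : ℝ :=
  brmRankedN f σ (i : ℕ)

/-- The nonincreasing rearrangement of an arbitrary score vector:
`sortDesc σ k` is the `k`-th largest entry of `σ` (0-indexed). -/
noncomputable def sortDesc {n : ℕ} (σ : Fin n → ℝ) : Fin n → ℝ :=
  fun k => σ (Tuple.sort σ k.rev)

/-- The (0-indexed) rank of creator `i` in the score vector `σ`, ties broken by index. -/
noncomputable def rankCount {n : ℕ} (σ : Fin n → ℝ) (i : Fin n) : ℕ :=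
  (Finset.univ.filter fun j => σ i < σ j ∨ (σ i = σ j ∧ j < i)).card

/-- Creator `i`'s BRM reward on an arbitrary score vector `σ ∈ [0,1]ⁿ`. -/
noncomputable def brmRewardAt {n : ℕ} (f : Fin n → ℝ → ℝ) (σ : Fin n → ℝ) (i : Fin n) : ℝ :=
  brmRankedN f (sortDesc σ) (rankCount σ i)

/-- The BRM potential `Φ(σ) = ∑_k ∫₀^{σ_(k)} f_k(t) dt`. -/
noncomputable def brmPotential {n : ℕ} (f : Fin n → ℝ → ℝ) (σ : Fin n → ℝ) : ℝ :=
  ∑ k : Fin n, ∫ t in (0:ℝ)..(sortDesc σ k), f k t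

/-!
For a sorted score vector the reward of rank `p` is `∫₀^{σ_p} f_{c(t)-1}(t) dt`, where `c(t)` is
the number of scores `≥ t`: on `(σ_{k+1}, σ_k]` exactly `k + 1` scores are `≥ t`, so the pieces
of the defining sum glue into one integral. The count `c` does not see the order of the scores,
so the same formula holds for an unsorted vector with the creator's own score as upper limit.
Raising the competitors' scores raises `c` pointwise, which lowers the integrand because `f_k`
decreases in `k`, while the upper limit stays put: this is the negative externality. Normality
and fairness are read off the definition and the same formula.
-/

open Finset
open scoped Interval

section

variable {n : ℕ}

lemma IntervalIntegrable.of_mem_Icc {g : ℝ → ℝ} {μ : Measure ℝ} {c d : ℝ}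
    (hg : IntervalIntegrable g μ c d) (hcd : c ≤ d) {a b : ℝ} (ha : a ∈ Set.Icc c d)
    (hb : b ∈ Set.Icc c d) : IntervalIntegrable g μ a b := by
  refine hg.mono_set (Set.uIcc_subset_uIcc ?_ ?_) <;> rwa [Set.uIcc_of_le hcd]

lemma le_nextVal_of_lt {σ : Fin n → ℝ} (hσ : Antitone σ) {j k : Fin n} (hkj : k < j) :
    σ j ≤ nextVal σ k := by
  have hk : (k : ℕ) + 1 < n := by omega
  rw [nextVal, dif_pos hk]
  exact hσ (Fin.le_def.2 (by simp only; omega))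

lemma SortedScores.nextVal_le {σ : Fin n → ℝ} (hσ : SortedScores n σ) (k : Fin n) :
    nextVal σ k ≤ σ k := by
  unfold nextVal
  split
  · exact hσ.1 _ _ (Fin.le_def.2 (Nat.le_succ _))
  · exact (hσ.2 k).1

lemma SortedScores.nextVal_mem {σ : Fin n → ℝ} (hσ : SortedScores n σ) (k : Fin n) :
    nextVal σ k ∈ Set.Icc (0:ℝ) 1 := by
  unfold nextVal
  split
  · exact hσ.2 _
  · exact ⟨le_rfl, zero_le_one⟩

lemma SortedScores.integral_nextVal_nonneg {f : Fin n → ℝ → ℝ}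
    (hf : ∀ k, ∀ t ∈ Set.Icc (0:ℝ) 1, 0 ≤ f k t) {σ : Fin n → ℝ} (hσ : SortedScores n σ)
    (k : Fin n) :
    0 ≤ ∫ t in (nextVal σ k)..(σ k), f k t :=
  intervalIntegral.integral_nonneg (hσ.nextVal_le k) fun t ht =>
    hf k t ⟨(hσ.nextVal_mem k).1.trans ht.1, ht.2.trans (hσ.2 k).2⟩

lemma sortedScores_onesVec (n k : ℕ) : SortedScores n (onesVec n k) := by
  refine ⟨fun i j hij => ?_, fun i => ?_⟩ <;> unfold onesVec
  · have : (i : ℕ) ≤ j := hij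
    split_ifs <;> first | omega | norm_num
  · split_ifs <;> norm_num

lemma brmRanked_sub_brmRanked (f : Fin n → ℝ → ℝ) (σ : Fin n → ℝ) {i j : Fin n} (hij : i ≤ j) :
    brmRanked f σ i - brmRanked f σ j =
      ∑ k : Fin n, if i ≤ k ∧ k < j then ∫ t in (nextVal σ k)..(σ k), f k t else 0 := by
  rw [brmRanked, brmRanked, brmRankedN, brmRankedN, ← Finset.sum_sub_distrib]
  refine Finset.sum_congr rfl fun k _ => ?_
  have : (i : ℕ) ≤ j := hij
  simp only [Fin.le_def, Fin.lt_def]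
  split_ifs <;> first | omega | ring

noncomputable def aboveCount (σ : Fin n → ℝ) (t : ℝ) : ℕ := #{j | t ≤ σ j}

-- Where no score is `≥ t` the truncated `0 - 1` selects `f₀`; such `t` lie outside every
-- integration range used below.
noncomputable def rewardDensity (f : Fin n → ℝ → ℝ) (σ : Fin n → ℝ) (t : ℝ) : ℝ :=
  if h : aboveCount σ t - 1 < n then f ⟨aboveCount σ t - 1, h⟩ t else 0

lemma aboveCount_le (σ : Fin n → ℝ) (t : ℝ) : aboveCount σ t ≤ n :=
  (card_filter_le _ _).trans_eq (card_fin n)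

lemma aboveCount_mono {σ σ' : Fin n → ℝ} (hle : ∀ j, σ j ≤ σ' j) (t : ℝ) :
    aboveCount σ t ≤ aboveCount σ' t :=
  card_le_card fun j hj => by
    simp only [mem_filter, mem_univ, true_and] at hj ⊢
    exact hj.trans (hle j)

lemma aboveCount_eq_of_mem_Ioc {σ : Fin n → ℝ} (hσ : Antitone σ) {k : Fin n} {t : ℝ}
    (ht : t ∈ Set.Ioc (nextVal σ k) (σ k)) : aboveCount σ t = k + 1 := by
  have : ({j | t ≤ σ j} : Finset (Fin n)) = Iic k := by
    ext j
    simp only [mem_filter, mem_univ, true_and, mem_Iic]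
    refine ⟨fun htj => not_lt.1 fun hkj => ?_, fun hjk => ht.2.trans (hσ hjk)⟩
    exact (ht.1.trans_le htj).not_ge (le_nextVal_of_lt hσ hkj)
  rw [aboveCount, this, Fin.card_Iic]

lemma rewardDensity_le {f : Fin n → ℝ → ℝ}
    (hf : ∀ k k' : Fin n, k ≤ k' → ∀ t ∈ Set.Icc (0:ℝ) 1, f k' t ≤ f k t) {σ σ' : Fin n → ℝ}
    (hle : ∀ j, σ j ≤ σ' j) {t : ℝ} (ht : t ∈ Set.Icc (0:ℝ) 1) (hpos : 0 < aboveCount σ t) :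
    rewardDensity f σ' t ≤ rewardDensity f σ t := by
  have hmono := aboveCount_mono hle t
  have hn := aboveCount_le σ' t
  unfold rewardDensity
  rw [dif_pos (by omega), dif_pos (by omega)]
  exact hf _ _ (Fin.le_def.2 (by simp only; omega)) t ht

lemma SortedScores.rewardDensity_eqOn {f : Fin n → ℝ → ℝ} {σ : Fin n → ℝ}
    (hσ : SortedScores n σ) (k : Fin n) :
    Set.EqOn (f k) (rewardDensity f σ) (Ι (nextVal σ k) (σ k)) := by
  intro t ht
  rw [Set.uIoc_of_le (hσ.nextVal_le k)] at ht
  have hc := aboveCount_eq_of_mem_Ioc hσ.1 ht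
  simp only [rewardDensity, hc, Nat.add_sub_cancel, dif_pos k.isLt]

lemma sum_integral_nextVal (σ : Fin n → ℝ) {g : ℝ → ℝ}
    (hg : ∀ k, IntervalIntegrable g volume (nextVal σ k) (σ k)) (p : Fin n) :
    (∑ k : Fin n, if (p : ℕ) ≤ k then ∫ t in (nextVal σ k)..(σ k), g t else 0)
        = ∫ t in (0:ℝ)..(σ p), g t ∧
      IntervalIntegrable g volume 0 (σ p) := by
  set a : ℕ → ℝ := fun m => if h : m < n then σ ⟨m, h⟩ else 0
  have ha_fin (k : Fin n) : a k = σ k := dif_pos k.isLt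
  have ha_n : a n = 0 := dif_neg (lt_irrefl n)
  have hint : ∀ m ∈ Set.Ico (p : ℕ) n, IntervalIntegrable g volume (a m) (a (m + 1)) := by
    intro m hm
    have ha_m : a m = σ ⟨m, hm.2⟩ := dif_pos _
    rw [ha_m]
    exact (hg _).symm
  have hIco : ({m ∈ range n | (p : ℕ) ≤ m} : Finset ℕ) = Ico (p : ℕ) n := by
    ext m
    simp only [mem_filter, mem_range, mem_Ico]
    omega
  refine ⟨?_, by
    simpa [ha_fin, ha_n] using (IntervalIntegrable.trans_iterate_Ico p.isLt.le hint).symm⟩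
  calc (∑ k : Fin n, if (p : ℕ) ≤ k then ∫ t in (nextVal σ k)..(σ k), g t else 0)
      = ∑ m ∈ Ico (p : ℕ) n, ∫ t in (a (m + 1))..(a m), g t := by
        rw [← hIco, sum_filter, ← Fin.sum_univ_eq_sum_range
          (fun m => if (p : ℕ) ≤ m then ∫ t in (a (m + 1))..(a m), g t else 0)]
        simp only [ha_fin]
        rfl
    _ = -∫ t in (a p)..(a n), g t := by
        rw [← intervalIntegral.sum_integral_adjacent_intervals_Ico p.isLt.le hint,
          ← sum_neg_distrib]
        exact sum_congr rfl fun m _ => intervalIntegral.integral_symm _ _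
    _ = ∫ t in (0:ℝ)..(σ p), g t := by
        rw [← intervalIntegral.integral_symm, ha_n, ha_fin]

lemma SortedScores.brmRanked_eq_integral {f : Fin n → ℝ → ℝ}
    (hf : ∀ k, IntervalIntegrable (f k) volume 0 1) {σ : Fin n → ℝ} (hσ : SortedScores n σ)
    (p : Fin n) :
    brmRanked f σ p = ∫ t in (0:ℝ)..(σ p), rewardDensity f σ t ∧
      IntervalIntegrable (rewardDensity f σ) volume 0 (σ p) := by
  have hpiece (k : Fin n) : IntervalIntegrable (rewardDensity f σ) volume (nextVal σ k) (σ k) :=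
    ((hf k).of_mem_Icc zero_le_one (hσ.nextVal_mem k) (hσ.2 k)).congr (hσ.rewardDensity_eqOn k)
  obtain ⟨hsum, hint⟩ := sum_integral_nextVal σ hpiece p
  refine ⟨?_, hint⟩
  rw [← hsum, brmRanked, brmRankedN]
  refine sum_congr rfl fun k _ => ?_
  split_ifs
  · exact intervalIntegral.integral_congr_ae (ae_of_all _ fun t ht => hσ.rewardDensity_eqOn k ht)
  · rfl

lemma brmRanked_onesVec_one {f : Fin n → ℝ → ℝ} (hf : ∀ k, IntervalIntegrable (f k) volume 0 1)
    {i : Fin n} (hi : (i : ℕ) = 0) :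
    brmRanked f (onesVec n 1) i = ∫ t in (0:ℝ)..1, f i t := by
  have hσ := sortedScores_onesVec n 1
  have h1 : onesVec n 1 i = 1 := by simp [onesVec, hi]
  have h0 : nextVal (onesVec n 1) i = 0 := by
    unfold nextVal
    split <;> simp [onesVec, hi]
  have heq := hσ.rewardDensity_eqOn (f := f) i
  rw [h0, h1] at heq
  rw [(hσ.brmRanked_eq_integral hf i).1, h1]
  exact intervalIntegral.integral_congr_ae (ae_of_all _ fun t ht => (heq ht).symm)

lemma antitone_sortDesc (σ : Fin n → ℝ) : Antitone (sortDesc σ) :=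
  fun _ _ h => Tuple.monotone_sort σ (Fin.rev_le_rev.2 h)

lemma sortedScores_sortDesc {σ : Fin n → ℝ} (hσ : ∀ j, σ j ∈ Set.Icc (0:ℝ) 1) :
    SortedScores n (sortDesc σ) :=
  ⟨antitone_sortDesc σ, fun _ => hσ _⟩

lemma card_filter_sortDesc (σ : Fin n → ℝ) (P : ℝ → Prop) [DecidablePred P] :
    #{k | P (sortDesc σ k)} = #{j | P (σ j)} := by
  refine card_equiv (Fin.revPerm.trans (Tuple.sort σ)) fun k => ?_
  rw [mem_filter, mem_filter]
  simp [sortDesc]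

lemma rewardDensity_sortDesc (f : Fin n → ℝ → ℝ) (σ : Fin n → ℝ) :
    rewardDensity f (sortDesc σ) = rewardDensity f σ := by
  have : aboveCount (sortDesc σ) = aboveCount σ :=
    funext fun t => card_filter_sortDesc σ (t ≤ ·)
  unfold rewardDensity
  rw [this]

lemma lt_card_filter_iff {τ : Fin n → ℝ} (hτ : Antitone τ) {P : ℝ → Prop} [DecidablePred P]
    (hP : Monotone P) (q : Fin n) : (q : ℕ) < #{k | P (τ k)} ↔ P (τ q) := by
  constructor
  · intro hq
    by_contra hPq
    have hsub : ({k | P (τ k)} : Finset (Fin n)) ⊆ Iio q := fun k hk => by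
      simp only [mem_filter, mem_univ, true_and] at hk
      exact mem_Iio.2 (not_le.1 fun hqk => hPq (hP (hτ hqk) hk))
    have := card_le_card hsub
    rw [Fin.card_Iio] at this
    omega
  · intro hPq
    have hsub : Iic q ⊆ ({k | P (τ k)} : Finset (Fin n)) := fun k hk => by
      simpa using hP (hτ (mem_Iic.1 hk)) hPq
    have := card_le_card hsub
    rw [Fin.card_Iic] at this
    omega

lemma rankCount_lt (σ : Fin n → ℝ) (i : Fin n) : rankCount σ i < n :=
  (card_lt_univ_of_notMem (x := i) (by simp)).trans_eq (card_fin n)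

lemma sortDesc_rankCount (σ : Fin n → ℝ) (i : Fin n) :
    sortDesc σ ⟨rankCount σ i, rankCount_lt σ i⟩ = σ i := by
  have hτ := antitone_sortDesc σ
  have hgt : #{j | σ i < σ j} ≤ rankCount σ i :=
    card_le_card fun j hj => by
      simp only [mem_filter, mem_univ, true_and] at hj ⊢
      exact Or.inl hj
  have hge : rankCount σ i < #{j | σ i ≤ σ j} := by
    refine card_lt_card ((ssubset_iff_of_subset fun j hj => ?_).2 ⟨i, by simp, by simp⟩)
    simp only [mem_filter, mem_univ, true_and] at hj ⊢
    rcases hj with h | ⟨h, -⟩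
    exacts [h.le, h.le]
  apply le_antisymm
  · refine not_lt.1 fun h => ?_
    have := (lt_card_filter_iff hτ (P := (σ i < ·)) (fun _ _ hxy h => h.trans_le hxy) _).2 h
    rw [card_filter_sortDesc σ (σ i < ·)] at this
    exact this.not_ge hgt
  · refine (lt_card_filter_iff hτ (P := (σ i ≤ ·)) (fun _ _ hxy h => h.trans hxy) _).1 ?_
    rw [card_filter_sortDesc σ (σ i ≤ ·)]
    exact hge

lemma brmRewardAt_eq_integral {f : Fin n → ℝ → ℝ}
    (hf : ∀ k, IntervalIntegrable (f k) volume 0 1) {σ : Fin n → ℝ}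
    (hσ : ∀ j, σ j ∈ Set.Icc (0:ℝ) 1) (i : Fin n) :
    brmRewardAt f σ i = ∫ t in (0:ℝ)..(σ i), rewardDensity f σ t ∧
      IntervalIntegrable (rewardDensity f σ) volume 0 (σ i) := by
  have := (sortedScores_sortDesc hσ).brmRanked_eq_integral hf ⟨rankCount σ i, rankCount_lt σ i⟩
  rwa [sortDesc_rankCount, rewardDensity_sortDesc] at this

theorem brmRewardAt_le_of_le {f : Fin n → ℝ → ℝ} (hf : BRMHyp f) {σ σ' : Fin n → ℝ}
    (hσ : ∀ j, σ j ∈ Set.Icc (0:ℝ) 1) (hσ' : ∀ j, σ' j ∈ Set.Icc (0:ℝ) 1) {i : Fin n}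
    (hi : σ' i = σ i) (hle : ∀ j, σ j ≤ σ' j) :
    brmRewardAt f σ' i ≤ brmRewardAt f σ i := by
  obtain ⟨h, hint⟩ := brmRewardAt_eq_integral hf.1 hσ i
  obtain ⟨h', hint'⟩ := brmRewardAt_eq_integral hf.1 hσ' i
  rw [h, h', hi]
  rw [hi] at hint'
  refine intervalIntegral.integral_mono_on (hσ i).1 hint' hint fun t ht => ?_
  refine rewardDensity_le hf.2.2.1 hle ⟨ht.1, ht.2.trans (hσ i).2⟩ (card_pos.2 ⟨i, ?_⟩)
  simpa using ht.2

end

/-- Every Backward Rewarding Mechanism is merit-based: normality,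
fairness (with the explicit difference formula), and negative externality all hold. -/
theorem stmt6 {n : ℕ} (f : Fin n → ℝ → ℝ) (hf : BRMHyp f) :
    -- Normality: a creator with score 0 receives reward 0
    (∀ σ, SortedScores n σ → ∀ i, σ i = 0 → brmRanked f σ i = 0) ∧
    -- Normality: a single creator with score 1 against all-zero competitors
    -- receives ∫₀¹ f₁(t) dt > 0
    (∀ i : Fin n, (i : ℕ) = 0 →
        brmRanked f (onesVec n 1) i = (∫ t in (0:ℝ)..1, f i t) ∧
        0 < brmRanked f (onesVec n 1) i) ∧
    -- Fairness: for i < j the reward difference is ∑_{k=i}^{j-1} ∫_{σ_{k+1}}^{σ_k} f_k ≥ 0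
    (∀ σ, SortedScores n σ → ∀ i j : Fin n, i ≤ j →
        brmRanked f σ i - brmRanked f σ j =
          (∑ k : Fin n, if i ≤ k ∧ k < j then ∫ t in (nextVal σ k)..(σ k), f k t else 0) ∧
        0 ≤ brmRanked f σ i - brmRanked f σ j) ∧
    -- Negative externality: increasing the others' scores weakly decreases i's reward
    (∀ σ σ' : Fin n → ℝ, (∀ j, σ j ∈ Set.Icc (0:ℝ) 1) → (∀ j, σ' j ∈ Set.Icc (0:ℝ) 1) →
        ∀ i, σ' i = σ i → (∀ j, j ≠ i → σ j ≤ σ' j) →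
        brmRewardAt f σ' i ≤ brmRewardAt f σ i) := by
  refine ⟨fun σ hσ i hi => ?_, fun i hi => ?_, fun σ hσ i j hij => ?_,
    fun σ σ' hσ hσ' i hi hle => ?_⟩
  · rw [(hσ.brmRanked_eq_integral hf.1 i).1, hi, intervalIntegral.integral_same]
  · rw [brmRanked_onesVec_one hf.1 hi]
    exact ⟨rfl, intervalIntegral.intervalIntegral_pos_of_pos_on (hf.1 i)
      (fun t ht => hf.2.2.2 i hi t (Set.Ioo_subset_Icc_self ht)) one_pos⟩
  · rw [brmRanked_sub_brmRanked f σ hij]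
    exact ⟨rfl, sum_nonneg fun k _ => by
      split_ifs
      exacts [hσ.integral_nextVal_nonneg hf.2.1 k, le_rfl]⟩
  · refine brmRewardAt_le_of_le hf hσ hσ' hi fun j => ?_
    rcases eq_or_ne j i with rfl | hj
    exacts [hi.ge, hle j hj]
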